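/- arXiv:2601.09622 — 4 statements merged into one kernel-verified Lean document; each statement's English description precedes it below -/
import Mathlib

section
/- For every real number a ≥ 2 and every integer m ≥ 2, one has a^(m(m+1)/2) · (1 - a⁻¹ - a⁻²) ≤ ∏_{i=1}^m (a^i - 1) ≤ a^(m(m+1)/2). -/
/-!
Dividing the `i`-th factor by `a ^ i` and writing `q = a⁻¹ ∈ [0, 1]`, the claim becomes
`1 - q - q² ≤ ∏_{i=1}^m (1 - q ^ i) ≤ 1`. The upper bound is termwise. For the lower bound one
proves the sharper `f m := 1 - q - q² + q ^ (m + 1) ≤ ∏_{i=1}^m (1 - q ^ i)` by induction on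
`m ≥ 1`, with equality at `m = 1`: `f m * (1 - q ^ (m + 1))` exceeds `f (m + 1)` by exactly
`q ^ (m + 3) - q ^ (2m + 2) ≥ 0`.
-/

open Finset

theorem Finset.sum_Icc_one_id (m : ℕ) : ∑ i ∈ Icc 1 m, i = m * (m + 1) / 2 := by
  rw [show Icc 1 m = Ioc 0 m from Icc_add_one_left_eq_Ioc 0 m, ← zero_add (∑ i ∈ Ioc 0 m, i),
    add_sum_Ioc_eq_sum_Icc (f := fun i => i) m.zero_le, ← Nat.range_succ_eq_Icc_zero,
    sum_range_id, mul_comm, Nat.add_sub_cancel]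

theorem Finset.prod_Icc_one_pow {M : Type*} [CommMonoid M] (x : M) (m : ℕ) :
    ∏ i ∈ Icc 1 m, x ^ i = x ^ (m * (m + 1) / 2) := by
  rw [prod_pow_eq_pow_sum, sum_Icc_one_id]

theorem prod_pow_sub_one_eq_prod_pow_mul_prod_one_sub_inv_pow {K : Type*} [Field K] {a : K}
    (ha : a ≠ 0) (s : Finset ℕ) :
    ∏ i ∈ s, (a ^ i - 1) = (∏ i ∈ s, a ^ i) * ∏ i ∈ s, (1 - a⁻¹ ^ i) := by
  rw [← prod_mul_distrib]
  refine prod_congr rfl fun i _ => ?_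
  rw [mul_sub, mul_one, ← mul_pow, mul_inv_cancel₀ ha, one_pow]

section OneSubPow

variable {R : Type*} [CommRing R] [LinearOrder R] [IsStrictOrderedRing R] {q : R}

theorem prod_one_sub_pow_le_one (hq0 : 0 ≤ q) (hq1 : q ≤ 1) (s : Finset ℕ) :
    ∏ i ∈ s, (1 - q ^ i) ≤ 1 :=
  prod_le_one (fun _ _ => sub_nonneg.2 (pow_le_one₀ hq0 hq1))
    fun i _ => sub_le_self _ (pow_nonneg hq0 i)

theorem one_sub_sub_add_pow_le_prod_Icc_one_sub_pow (hq0 : 0 ≤ q) (hq1 : q ≤ 1) {m : ℕ}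
    (hm : 1 ≤ m) : 1 - q - q ^ 2 + q ^ (m + 1) ≤ ∏ i ∈ Icc 1 m, (1 - q ^ i) := by
  induction m, hm using Nat.le_induction with
  | base => simp
  | succ n hn ih =>
    rw [prod_Icc_succ_top (by omega)]
    have hpow : q ^ (2 * n + 2) ≤ q ^ (n + 3) := pow_le_pow_of_le_one hq0 hq1 (by omega)
    calc 1 - q - q ^ 2 + q ^ (n + 1 + 1)
        ≤ 1 - q - q ^ 2 + q ^ (n + 1 + 1) + (q ^ (n + 3) - q ^ (2 * n + 2)) := by linarith
      _ = (1 - q - q ^ 2 + q ^ (n + 1)) * (1 - q ^ (n + 1)) := by ring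
      _ ≤ _ := mul_le_mul_of_nonneg_right ih (sub_nonneg.2 (pow_le_one₀ hq0 hq1))

theorem one_sub_sub_sq_le_prod_Icc_one_sub_pow (hq0 : 0 ≤ q) (hq1 : q ≤ 1) (m : ℕ) :
    1 - q - q ^ 2 ≤ ∏ i ∈ Icc 1 m, (1 - q ^ i) := by
  rcases Nat.eq_zero_or_pos m with rfl | hm
  · simp only [Icc_eq_empty_of_lt zero_lt_one, prod_empty]
    nlinarith [sq_nonneg q]
  · exact (le_add_of_nonneg_right (pow_nonneg hq0 _)).trans
      (one_sub_sub_add_pow_le_prod_Icc_one_sub_pow hq0 hq1 hm)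

end OneSubPow

theorem stmt_0_general (a : ℝ) (m : ℕ) (ha : 2 ≤ a) :
    a ^ (m * (m + 1) / 2) * (1 - a⁻¹ - (a ^ 2)⁻¹) ≤
      ∏ i ∈ Finset.Icc 1 m, (a ^ i - 1) ∧
    ∏ i ∈ Finset.Icc 1 m, (a ^ i - 1) ≤ a ^ (m * (m + 1) / 2) := by
  have hq0 : 0 ≤ a⁻¹ := by positivity
  have hq1 : a⁻¹ ≤ 1 := inv_le_one_of_one_le₀ (by linarith)
  have hpow : 0 ≤ a ^ (m * (m + 1) / 2) := by positivity
  rw [prod_pow_sub_one_eq_prod_pow_mul_prod_one_sub_inv_pow (by positivity), prod_Icc_one_pow,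
    ← inv_pow]
  exact ⟨mul_le_mul_of_nonneg_left (one_sub_sub_sq_le_prod_Icc_one_sub_pow hq0 hq1 m) hpow,
    mul_le_of_le_one_right hpow (prod_one_sub_pow_le_one hq0 hq1 _)⟩

/-- For every real `a ≥ 2` and integer `m ≥ 2`,
`a^(m(m+1)/2) (1 - a⁻¹ - a⁻²) ≤ ∏_{i=1}^m (a^i - 1) ≤ a^(m(m+1)/2)`. -/
theorem stmt_0 (a : ℝ) (m : ℕ) (ha : 2 ≤ a) (hm : 2 ≤ m) :
    a ^ (m * (m + 1) / 2) * (1 - a⁻¹ - (a ^ 2)⁻¹) ≤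
      ∏ i ∈ Finset.Icc 1 m, (a ^ i - 1) ∧
    ∏ i ∈ Finset.Icc 1 m, (a ^ i - 1) ≤ a ^ (m * (m + 1) / 2) :=
  stmt_0_general a m ha
end

section
/- For every real number a ≥ 2 and every integer m ≥ 2, one has a^(m(m+1)/2) · (1 - a⁻¹ - a⁻²) ≤ ∏_{i=1}^m (a^i - (-1)^i) ≤ a^(m(m+1)/2) · (1 - a⁻¹ - a⁻²)⁻¹. -/
/-!
Put `x = a⁻¹ ∈ (0, 1/2]`. Factoring `a ^ i` out of the `i`-th factor turns the product into
`a ^ (m(m+1)/2) * ∏ (1 - (-x) ^ i)`, so it suffices to show `1 ≤ ∏ (1 - (-x) ^ i) ≤ 1 + x`,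
since `1 - x - x² ≤ 1` and `(1 + x)(1 - x - x²) = 1 - 2x² - x³ ≤ 1`. The factors alternate
between `1 + x ^ i` (odd `i`) and `1 - x ^ i` (even `i`). Grouping them as (odd, next even), each
pair `(1 + y)(1 - xy) = 1 + y(1 - x - xy)` is at least `1`; grouping them as `1 + x` followed by
(even, next odd) pairs, each pair `(1 - y)(1 + xy) = 1 - y(1 - x + xy)` is at most `1`.
-/

open Finset

/-- The q-Pochhammer symbol `(q; q)_n`. -/
def qPochhammer {R : Type*} [CommRing R] (q : R) (n : ℕ) : R :=
  ∏ i ∈ Icc 1 n, (1 - q ^ i)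

section CommRing

variable {R : Type*} [CommRing R]

@[simp]
theorem qPochhammer_zero (q : R) : qPochhammer q 0 = 1 := by
  simp [qPochhammer]

theorem qPochhammer_add_one (q : R) (n : ℕ) :
    qPochhammer q (n + 1) = qPochhammer q n * (1 - q ^ (n + 1)) :=
  prod_Icc_succ_top (by omega) _

theorem qPochhammer_add_two (q : R) (n : ℕ) :
    qPochhammer q (n + 2) = qPochhammer q n * ((1 - q ^ (n + 1)) * (1 - q ^ (n + 2))) := by
  rw [qPochhammer_add_one, qPochhammer_add_one, mul_assoc]

theorem neg_pow_two_mul_add_one (x : R) (k : ℕ) : (-x) ^ (2 * k + 1) = -x ^ (2 * k + 1) :=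
  Odd.neg_pow ⟨k, rfl⟩ x

theorem neg_pow_two_mul_add_two (x : R) (k : ℕ) : (-x) ^ (2 * k + 2) = x ^ (2 * k + 2) :=
  Even.neg_pow ⟨k + 1, by ring⟩ x

end CommRing

theorem prod_Icc_pow_sub_neg_one_pow {K : Type*} [Field K] {a : K} (ha : a ≠ 0) (m : ℕ) :
    ∏ i ∈ Icc 1 m, (a ^ i - (-1 : K) ^ i) = a ^ (m * (m + 1) / 2) * qPochhammer (-a⁻¹) m := by
  have gauss : ∑ i ∈ Icc 1 m, i = m * (m + 1) / 2 := by
    have := sum_range_id (m + 1)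
    rw [range_eq_Ico, sum_eq_sum_Ico_succ_bot (by omega), Ico_add_one_right_eq_Icc] at this
    simpa [Nat.mul_comm] using this
  rw [← gauss, ← prod_pow_eq_pow_sum, qPochhammer, ← prod_mul_distrib]
  refine prod_congr rfl fun i _ => ?_
  rw [neg_pow a⁻¹, inv_pow, mul_sub, mul_one, mul_left_comm, mul_inv_cancel₀ (pow_ne_zero i ha),
    mul_one]

section Ordered

variable {K : Type*} [Field K] [LinearOrder K] [IsStrictOrderedRing K] {x : K}

theorem one_le_one_add_pow_mul_one_sub_pow_succ (hx0 : 0 ≤ x) (hx : x ≤ 1 / 2) (n : ℕ) :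
    1 ≤ (1 + x ^ n) * (1 - x ^ (n + 1)) := by
  have hy0 : 0 ≤ x ^ n := pow_nonneg hx0 n
  have hy1 : x ^ n ≤ 1 := pow_le_one₀ hx0 (by linarith)
  rw [pow_succ]
  nlinarith [mul_le_mul hy1 hx hx0 zero_le_one]

theorem one_sub_pow_mul_one_add_pow_succ_le_one (hx0 : 0 ≤ x) (hx1 : x ≤ 1) (n : ℕ) :
    (1 - x ^ n) * (1 + x ^ (n + 1)) ≤ 1 := by
  have hy0 : 0 ≤ x ^ n := pow_nonneg hx0 n
  rw [pow_succ]
  nlinarith [mul_nonneg (mul_nonneg hy0 hy0) hx0]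

theorem qPochhammer_neg_nonneg (hx0 : 0 ≤ x) (hx1 : x ≤ 1) (n : ℕ) :
    0 ≤ qPochhammer (-x) n := by
  refine prod_nonneg fun i _ => sub_nonneg.2 ((le_abs_self _).trans ?_)
  rw [abs_pow, abs_neg, abs_of_nonneg hx0]
  exact pow_le_one₀ hx0 hx1

theorem one_le_qPochhammer_neg (hx0 : 0 ≤ x) (hx : x ≤ 1 / 2) (n : ℕ) :
    1 ≤ qPochhammer (-x) n := by
  have even : ∀ k, 1 ≤ qPochhammer (-x) (2 * k) := by
    intro k
    induction k with
    | zero => simp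
    | succ k ih =>
      rw [mul_add_one, qPochhammer_add_two, neg_pow_two_mul_add_one, neg_pow_two_mul_add_two,
        sub_neg_eq_add]
      exact one_le_mul_of_one_le_of_one_le ih
        (one_le_one_add_pow_mul_one_sub_pow_succ hx0 hx _)
  obtain ⟨k, rfl | rfl⟩ := Nat.even_or_odd' n
  · exact even k
  · rw [qPochhammer_add_one, neg_pow_two_mul_add_one, sub_neg_eq_add]
    exact one_le_mul_of_one_le_of_one_le (even k) (le_add_of_nonneg_right (pow_nonneg hx0 _))

theorem qPochhammer_neg_le (hx0 : 0 ≤ x) (hx1 : x ≤ 1) (n : ℕ) :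
    qPochhammer (-x) n ≤ 1 + x := by
  have odd : ∀ k, qPochhammer (-x) (2 * k + 1) ≤ 1 + x := by
    intro k
    induction k with
    | zero => simp [qPochhammer]
    | succ k ih =>
      rw [show 2 * (k + 1) + 1 = 2 * k + 1 + 2 by ring, qPochhammer_add_two,
        show 2 * k + 1 + 1 = 2 * k + 2 by ring, show 2 * k + 1 + 2 = 2 * (k + 1) + 1 by ring,
        neg_pow_two_mul_add_one, neg_pow_two_mul_add_two, sub_neg_eq_add]
      exact (mul_le_of_le_one_right (qPochhammer_neg_nonneg hx0 hx1 _)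
        (one_sub_pow_mul_one_add_pow_succ_le_one hx0 hx1 _)).trans ih
  obtain ⟨k, rfl | rfl⟩ := Nat.even_or_odd' n
  · refine le_trans ?_ (odd k)
    rw [qPochhammer_add_one, neg_pow_two_mul_add_one, sub_neg_eq_add]
    exact le_mul_of_one_le_right (qPochhammer_neg_nonneg hx0 hx1 _)
      (le_add_of_nonneg_right (pow_nonneg hx0 _))
  · exact odd k

theorem one_add_le_inv_one_sub_sub_sq (hx0 : 0 ≤ x) (hx : x ≤ 1 / 2) :
    1 + x ≤ (1 - x - x ^ 2)⁻¹ := by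
  rw [le_inv_comm₀ (by positivity) (by nlinarith), ← one_div, le_div_iff₀ (by positivity)]
  nlinarith [pow_nonneg hx0 3]

end Ordered

theorem stmt_1_general (a : ℝ) (m : ℕ) (ha : 2 ≤ a) :
    a ^ (m * (m + 1) / 2) * (1 - a⁻¹ - (a ^ 2)⁻¹) ≤
      ∏ i ∈ Finset.Icc 1 m, (a ^ i - (-1 : ℝ) ^ i) ∧
    ∏ i ∈ Finset.Icc 1 m, (a ^ i - (-1 : ℝ) ^ i) ≤
      a ^ (m * (m + 1) / 2) * (1 - a⁻¹ - (a ^ 2)⁻¹)⁻¹ := by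
  have hx0 : 0 ≤ a⁻¹ := by positivity
  have hx : a⁻¹ ≤ 1 / 2 := by
    rw [one_div]
    exact inv_anti₀ two_pos ha
  have hpow : 0 ≤ a ^ (m * (m + 1) / 2) := by positivity
  rw [prod_Icc_pow_sub_neg_one_pow (by positivity), ← inv_pow]
  constructor
  · refine mul_le_mul_of_nonneg_left ?_ hpow
    nlinarith [one_le_qPochhammer_neg hx0 hx m]
  · refine mul_le_mul_of_nonneg_left ?_ hpow
    exact (qPochhammer_neg_le hx0 (by linarith) m).trans (one_add_le_inv_one_sub_sub_sq hx0 hx)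

/-- For every real `a ≥ 2` and integer `m ≥ 2`,
`a^(m(m+1)/2) (1 - a⁻¹ - a⁻²) ≤ ∏_{i=1}^m (a^i - (-1)^i) ≤ a^(m(m+1)/2) (1 - a⁻¹ - a⁻²)⁻¹`. -/
theorem stmt_1 (a : ℝ) (m : ℕ) (ha : 2 ≤ a) (hm : 2 ≤ m) :
    a ^ (m * (m + 1) / 2) * (1 - a⁻¹ - (a ^ 2)⁻¹) ≤
      ∏ i ∈ Finset.Icc 1 m, (a ^ i - (-1 : ℝ) ^ i) ∧
    ∏ i ∈ Finset.Icc 1 m, (a ^ i - (-1 : ℝ) ^ i) ≤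
      a ^ (m * (m + 1) / 2) * (1 - a⁻¹ - (a ^ 2)⁻¹)⁻¹ :=
  stmt_1_general a m ha
end

section
/- Let q be a power of 2 and Δ a monic irreducible polynomial over F_{q²} of degree k. If the set of roots of Δ is stable under the map ζ ↦ ζ^{-q} (i.e. Δ = Δ†), then k is odd. -/
open Polynomial IntermediateField

/-- Let `q = 2^f` and let `Δ` be a monic irreducible polynomial over `F_{q²}` of degree
`k`.  If the set of roots of `Δ` in the algebraic closure is stable under `ζ ↦ ζ^{-q}`
(`Δ = Δ†`), then `k` is odd. -/
theorem stmt_6 (f : ℕ) (hf : 1 ≤ f) (K : Type*) [Field K] [Fintype K]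
    (hK : Fintype.card K = (2 ^ f) ^ 2)
    (Δ : Polynomial K) (hmonic : Δ.Monic) (hirr : Irreducible Δ)
    (hroots : ∀ x : AlgebraicClosure K,
      Polynomial.aeval x Δ = 0 → Polynomial.aeval ((x ^ (2 ^ f))⁻¹) Δ = 0) :
    Odd Δ.natDegree := by
  classical
  haveI : Fact (Nat.Prime 2) := ⟨Nat.prime_two⟩
  set L := AlgebraicClosure K
  set Q : ℕ := 2 ^ f with hQdef
  have hQ1 : 1 < Q := Nat.one_lt_two_pow_iff.mpr (by omega)
  have hQsq1 : 1 < Q ^ 2 := Nat.one_lt_pow two_ne_zero hQ1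
  -- characteristic 2
  haveI hchar : CharP K 2 := by
    obtain ⟨n, hp, hcard⟩ := FiniteField.card K (ringChar K)
    have h2 : ringChar K = 2 := by
      have hK' : Fintype.card K = 2 ^ (f * 2) := by rw [hK, hQdef, ← pow_mul]
      have hdvd : ringChar K ∣ 2 ^ (f * 2) := by
        rw [← hK', hcard]
        exact dvd_pow_self _ n.pos.ne'
      exact (Nat.prime_dvd_prime_iff_eq hp Nat.prime_two).mp (hp.dvd_of_dvd_pow hdvd)
    exact h2 ▸ ringChar.charP K
  haveI : CharP L 2 := inferInstance
  have hexp : ∀ m : ℕ, (Q ^ 2) ^ m = (2 : ℕ) ^ (f * 2 * m) := by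
    intro m; rw [hQdef]; ring
  set k := Δ.natDegree with hkdef
  have hk0 : 0 < k := hirr.natDegree_pos
  -- a root in the algebraic closure
  obtain ⟨x, hx⟩ : ∃ x : L, aeval x Δ = 0 :=
    IsAlgClosed.exists_aeval_eq_zero L Δ (degree_ne_of_natDegree_ne hk0.ne')
  have hminp : minpoly K x = Δ := (minpoly.eq_of_irreducible_of_monic hirr hx hmonic).symm
  have hxint : IsIntegral K x := ⟨Δ, hmonic, by rwa [← aeval_def]⟩
  by_cases hx0 : x = 0
  · -- then Δ = X, degree 1
    have h1 : Δ = X - C 0 := by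
      rw [← hminp, hx0, show (0 : L) = algebraMap K L 0 from (map_zero _).symm,
        minpoly.eq_X_sub_C]
    have : k = 1 := by rw [hkdef, h1]; simp
    rw [this]; exact ⟨0, rfl⟩
  -- the Frobenius of K as an algebra endomorphism of L
  let φ : L →ₐ[K] L :=
    { toRingHom := iterateFrobenius L 2 (f * 2)
      commutes' := fun a => by
        show iterateFrobenius L 2 (f * 2) (algebraMap K L a) = algebraMap K L a
        rw [iterateFrobenius_def, ← map_pow]
        congr 1
        rw [show (2 : ℕ) ^ (f * 2) = Fintype.card K by rw [hK, hQdef, ← pow_mul]]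
        exact FiniteField.pow_card a }
  have hφ : ∀ z : L, φ z = z ^ Q ^ 2 := fun z => by
    show iterateFrobenius L 2 (f * 2) z = z ^ Q ^ 2
    rw [iterateFrobenius_def, hQdef, ← pow_mul]
  -- all iterated Frobenius images of x are roots of Δ
  have hrootpow : ∀ i : ℕ, aeval (x ^ (Q ^ 2) ^ i) Δ = 0 := by
    intro i; induction i with
    | zero => simpa using hx
    | succ i ih =>
        have h1 : aeval (φ (x ^ (Q ^ 2) ^ i)) Δ = 0 := by
          rw [aeval_algHom_apply, ih, map_zero]
        rwa [hφ, ← pow_mul, ← pow_succ] at h1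
  -- injectivity of powers of Frobenius
  have hinj : ∀ c : ℕ, Function.Injective fun z : L => z ^ (Q ^ 2) ^ c := by
    intro c
    have h := (iterateFrobenius L 2 (f * 2 * c)).injective
    have heq : (fun z : L => z ^ (Q ^ 2) ^ c) = ⇑(iterateFrobenius L 2 (f * 2 * c)) := by
      funext z; rw [iterateFrobenius_def, hexp]
    rw [heq]; exact h
  -- K⟮x⟯ is a finite field with (Q²)^k elements
  haveI := IntermediateField.adjoin.finiteDimensional hxint
  haveI : Finite K⟮x⟯ := Module.finite_of_finite K
  haveI : Fintype K⟮x⟯ := Fintype.ofFinite _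
  have hcardF : Fintype.card K⟮x⟯ = (Q ^ 2) ^ k := by
    rw [Module.card_eq_pow_finrank (K := K), IntermediateField.adjoin.finrank hxint, hminp, hK]
  have hkM : x ^ (Q ^ 2) ^ k = x := by
    have h3 : x ^ Fintype.card K⟮x⟯ = x := by
      simpa using congrArg (algebraMap K⟮x⟯ L)
        (FiniteField.pow_card (IntermediateField.AdjoinSimple.gen K x))
    rwa [hcardF] at h3
  -- the minimal period e
  have hex : ∃ m, 0 < m ∧ x ^ (Q ^ 2) ^ m = x := ⟨k, hk0, hkM⟩
  set e := Nat.find hex with hedef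
  obtain ⟨he0, heM⟩ := Nat.find_spec hex
  have hemin : ∀ m, 0 < m → x ^ (Q ^ 2) ^ m = x → e ≤ m := fun m h1 h2 =>
    Nat.find_le ⟨h1, h2⟩
  have hcomp : ∀ a b : ℕ, x ^ (Q ^ 2) ^ (a + b) = (x ^ (Q ^ 2) ^ a) ^ (Q ^ 2) ^ b := by
    intro a b; rw [pow_add (Q ^ 2) a b, pow_mul]
  have hmul : ∀ t : ℕ, x ^ (Q ^ 2) ^ (e * t) = x := by
    intro t; induction t with
    | zero => simp
    | succ t ih => rw [mul_add, mul_one, hcomp, ih, heM]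
  have hdvd : ∀ m, x ^ (Q ^ 2) ^ m = x → e ∣ m := by
    intro m hm
    have hr : x ^ (Q ^ 2) ^ (m % e) = x := by
      have hsplit : m = e * (m / e) + m % e := (Nat.div_add_mod m e).symm
      rw [hsplit, hcomp, hmul] at hm
      exact hm
    rcases Nat.eq_zero_or_pos (m % e) with h0 | hpos
    · exact Nat.dvd_of_mod_eq_zero h0
    · exact absurd (hemin _ hpos hr) (Nat.not_le.mpr (Nat.mod_lt m he0))
  have hek : e ∣ k := hdvd k hkM
  -- k ≤ e : all elements of K⟮x⟯ are fixed by the e-th power of Frobenius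
  have hfix : ∀ z ∈ K⟮x⟯, z ^ (2 : ℕ) ^ (f * 2 * e) = z := by
    intro z hz
    induction hz using IntermediateField.adjoin_induction with
    | mem y hy => rw [Set.mem_singleton_iff.mp hy, ← hexp]; exact heM
    | algebraMap a =>
        rw [← map_pow]
        congr 1
        rw [show (2 : ℕ) ^ (f * 2 * e) = (Fintype.card K) ^ e by rw [hK, hexp]]
        exact FiniteField.pow_card_pow _ _
    | add y w hy hw ihy ihw => rw [add_pow_char_pow, ihy, ihw]
    | inv y hy ihy => rw [inv_pow, ihy]
    | mul y w hy hw ihy ihw => rw [mul_pow, ihy, ihw]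
  have hke : k ≤ e := by
    set T : Finset L := Finset.univ.image (fun z : K⟮x⟯ => (z : L)) with hT
    have hTcard : T.card = (Q ^ 2) ^ k := by
      rw [hT, Finset.card_image_of_injective _ Subtype.coe_injective, Finset.card_univ,
        hcardF]
    have hfe0 : f * 2 * e ≠ 0 := by positivity
    have hne : (X ^ 2 ^ (f * 2 * e) - X : L[X]) ≠ 0 :=
      FiniteField.X_pow_card_pow_sub_X_ne_zero L hfe0 one_lt_two
    have hsub : T ⊆ (X ^ 2 ^ (f * 2 * e) - X : L[X]).roots.toFinset := by
      intro z hz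
      obtain ⟨w, _, rfl⟩ := Finset.mem_image.mp hz
      rw [Multiset.mem_toFinset, mem_roots hne]
      simp [IsRoot, hfix (w : L) w.2]
    have hTle : T.card ≤ 2 ^ (f * 2 * e) :=
      calc T.card ≤ _ := Finset.card_le_card hsub
        _ ≤ Multiset.card (X ^ 2 ^ (f * 2 * e) - X : L[X]).roots :=
            Multiset.toFinset_card_le _
        _ ≤ (X ^ 2 ^ (f * 2 * e) - X : L[X]).natDegree := card_roots' _
        _ = 2 ^ (f * 2 * e) :=
            FiniteField.X_pow_card_pow_sub_X_natDegree_eq L hfe0 one_lt_two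
    rw [hTcard, ← hexp] at hTle
    exact (Nat.pow_le_pow_iff_right hQsq1).mp hTle
  have hke' : e = k := le_antisymm (Nat.le_of_dvd hk0 hek) hke
  -- the set of Frobenius conjugates of x
  set Δ' := Δ.map (algebraMap K L) with hΔ'
  have hΔ'ne : Δ' ≠ 0 :=
    (Polynomial.map_ne_zero_iff (algebraMap K L).injective).mpr hmonic.ne_zero
  have hΔ'deg : Δ'.natDegree = k := hmonic.natDegree_map _
  have hroot_mem : ∀ y : L, aeval y Δ = 0 → y ∈ Δ'.roots.toFinset := by
    intro y hy
    rw [Multiset.mem_toFinset, mem_roots hΔ'ne, IsRoot.def, hΔ', eval_map, ← aeval_def]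
    exact hy
  have hrootsize : (Δ'.roots.toFinset).card ≤ k :=
    le_trans (Multiset.toFinset_card_le _) (le_trans (card_roots' _) (le_of_eq hΔ'deg))
  set g : ℕ → L := fun i => x ^ (Q ^ 2) ^ (i + 1) with hg
  have hkey : ∀ a b : ℕ, a ≤ b → b < e → g a = g b → a = b := by
    intro a b hab hb hgab
    have h1 : x ^ (Q ^ 2) ^ (b + 1) = (x ^ (Q ^ 2) ^ (b - a)) ^ (Q ^ 2) ^ (a + 1) := by
      rw [show b + 1 = (b - a) + (a + 1) by omega]
      exact hcomp (b - a) (a + 1)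
    have h2 : (fun z : L => z ^ (Q ^ 2) ^ (a + 1)) x
        = (fun z : L => z ^ (Q ^ 2) ^ (a + 1)) (x ^ (Q ^ 2) ^ (b - a)) := by
      simpa [hg] using hgab.trans h1
    have h3 : x = x ^ (Q ^ 2) ^ (b - a) := hinj (a + 1) h2
    rcases Nat.eq_zero_or_pos (b - a) with h0 | hpos
    · omega
    · have := hemin (b - a) hpos h3.symm
      omega
  have hginj : Set.InjOn g (Finset.range e) := by
    intro a ha b hb hgab
    simp only [Finset.coe_range, Set.mem_Iio] at ha hb
    rcases le_total a b with h | h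
    · exact hkey a b h hb hgab
    · exact (hkey b a h ha hgab.symm).symm
  set R : Finset L := (Finset.range e).image g with hR
  have hRcard : R.card = e := by
    rw [hR, Finset.card_image_of_injOn hginj, Finset.card_range]
  have hRsub : R ⊆ Δ'.roots.toFinset := by
    intro y hy
    obtain ⟨i, _, rfl⟩ := Finset.mem_image.mp hy
    exact hroot_mem _ (hrootpow (i + 1))
  -- (x^Q)⁻¹ is a root, hence a Frobenius conjugate of x
  have hx1 : aeval ((x ^ Q)⁻¹) Δ = 0 := hroots x hx
  have hx1mem : (x ^ Q)⁻¹ ∈ Δ'.roots.toFinset := hroot_mem _ hx1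
  have hx1R : (x ^ Q)⁻¹ ∈ R := by
    by_contra hnot
    have hsub2 : insert ((x ^ Q)⁻¹) R ⊆ Δ'.roots.toFinset := by
      intro y hy
      rcases Finset.mem_insert.mp hy with rfl | h
      · exact hx1mem
      · exact hRsub h
    have hcard2 : (insert ((x ^ Q)⁻¹) R).card ≤ Δ'.roots.toFinset.card :=
      Finset.card_le_card hsub2
    rw [Finset.card_insert_of_notMem hnot, hRcard] at hcard2
    omega
  obtain ⟨i, hi, hieq⟩ := Finset.mem_image.mp hx1R
  rw [Finset.mem_range] at hi
  set j := i + 1 with hj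
  have hxQ : x ^ Q ≠ 0 := pow_ne_zero _ hx0
  have hone : x ^ ((Q ^ 2) ^ j + Q) = 1 := by
    rw [pow_add]
    have : x ^ (Q ^ 2) ^ j = (x ^ Q)⁻¹ := hieq
    rw [this, inv_mul_cancel₀ hxQ]
  set s := 2 * j - 1 with hs
  have hss : (Q ^ 2) ^ j + Q = Q * (Q ^ s + 1) := by
    have h2j : 2 * j = s + 1 := by omega
    rw [← pow_mul, h2j, pow_succ]
    ring
  have hzq : (x ^ (Q ^ s + 1)) ^ (2 : ℕ) ^ f = 1 := by
    rw [← pow_mul, ← hQdef, mul_comm, ← hss, hone]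
  have hz1 : x ^ (Q ^ s + 1) = 1 := by
    have hinjQ : Function.Injective fun z : L => z ^ (2 : ℕ) ^ f := by
      have h := (iterateFrobenius L 2 f).injective
      have heq : (fun z : L => z ^ (2 : ℕ) ^ f) = ⇑(iterateFrobenius L 2 f) := by
        funext z; rw [iterateFrobenius_def]
      rw [heq]; exact h
    have : (fun z : L => z ^ (2 : ℕ) ^ f) (x ^ (Q ^ s + 1))
        = (fun z : L => z ^ (2 : ℕ) ^ f) 1 := by
      simpa using hzq
    exact hinjQ this
  have hsM : x ^ (Q ^ 2) ^ s = x := by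
    obtain ⟨b, hb⟩ : ∃ b, Q ^ s = b + 1 :=
      ⟨Q ^ s - 1, by have := Nat.one_le_pow s Q (by omega); omega⟩
    have h2 : (Q ^ s + 1) * (Q ^ s - 1) + 1 = (Q ^ 2) ^ s := by
      rw [show (Q ^ 2) ^ s = (Q ^ s) ^ 2 by ring, hb]
      simp only [Nat.add_sub_cancel]
      ring
    rw [← h2, pow_add, pow_mul, hz1, one_pow, pow_one, one_mul]
  have hes : e ∣ s := hdvd s hsM
  have hsodd : Odd s := ⟨i, by omega⟩
  rw [← hke']
  rcases Nat.even_or_odd e with hev | hod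
  · exfalso
    have h2e : 2 ∣ e := hev.two_dvd
    have : 2 ∣ s := h2e.trans hes
    rw [← Nat.not_even_iff_odd] at hsodd
    exact hsodd (even_iff_two_dvd.mpr this)
  · exact hod
end

section
/- Let u ∈ GL_d(F_q) be an involution (u² = 1, char F_q = 2) whose Jordan normal form consists of l Jordan blocks of size 2 and d - 2l blocks of size 1. Then the centralizer C of u in GL_d(F_q) is a semidirect product C = U ⋊ L where U is a normal unipotent subgroup of order q^(2ld - 3l²) and L ≅ GL_l(q) × GL_{d-2l}(q). -/
open Matrix

namespace StdStuff
variable {K : Type*} [Field K] {l m : ℕ}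
abbrev Idx (l m : ℕ) := Fin l ⊕ (Fin m ⊕ Fin l)

def tri (A : Matrix (Fin l) (Fin l) K) (B : Matrix (Fin l) (Fin m) K)
    (C : Matrix (Fin l) (Fin l) K) (F : Matrix (Fin m) (Fin m) K)
    (G : Matrix (Fin m) (Fin l) K) : Matrix (Idx l m) (Idx l m) K :=
  fromBlocks A (fromCols B C) 0 (fromBlocks F G 0 A)

lemma fromColumns_add {p q r : Type*} (A₁ : Matrix p q K) (A₂ : Matrix p r K)
    (B₁ : Matrix p q K) (B₂ : Matrix p r K) :
    fromCols A₁ A₂ + fromCols B₁ B₂ = fromCols (A₁ + B₁) (A₂ + B₂) := by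
  ext i (j|j) <;> simp [fromCols]

lemma tri_mul (A B C F G A' B' C' F' G') :
    (tri A B C F G : Matrix (Idx l m) (Idx l m) K) * tri A' B' C' F' G' =
      tri (A*A') (A*B' + B*F') (A*C' + B*G' + C*A') (F*F') (F*G' + G*A') := by
  simp only [tri, fromBlocks_multiply, fromCols_mul_fromBlocks, mul_fromCols,
    Matrix.mul_zero, Matrix.zero_mul, add_zero, zero_add, Matrix.mul_one, fromColumns_add,
    add_assoc]

lemma tri_one : (tri 1 0 0 1 0 : Matrix (Idx l m) (Idx l m) K) = 1 := by
  ext (i|i|i) (j|j|j) <;>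
    simp [tri, fromBlocks, fromCols, Matrix.one_apply, Sum.inl.injEq, Sum.inr.injEq]

lemma tri_zero : (tri 0 0 0 0 0 : Matrix (Idx l m) (Idx l m) K) = 0 := by
  ext (i|i|i) (j|j|j) <;> simp [tri, fromBlocks, fromCols]

lemma tri_sub (A B C F G A' B' C' F' G') :
    (tri A B C F G : Matrix (Idx l m) (Idx l m) K) - tri A' B' C' F' G' =
      tri (A - A') (B - B') (C - C') (F - F') (G - G') := by
  ext (i|i|i) (j|j|j) <;> simp [tri, fromBlocks, fromCols]

def Emat (l m : ℕ) (K : Type*) [Field K] : Matrix (Idx l m) (Idx l m) K := tri 0 0 1 0 0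

def blA (M : Matrix (Idx l m) (Idx l m) K) : Matrix (Fin l) (Fin l) K := M.toBlocks₁₁
def blB (M : Matrix (Idx l m) (Idx l m) K) : Matrix (Fin l) (Fin m) K := M.toBlocks₁₂.toCols₁
def blC (M : Matrix (Idx l m) (Idx l m) K) : Matrix (Fin l) (Fin l) K := M.toBlocks₁₂.toCols₂
def blF (M : Matrix (Idx l m) (Idx l m) K) : Matrix (Fin m) (Fin m) K := M.toBlocks₂₂.toBlocks₁₁
def blG (M : Matrix (Idx l m) (Idx l m) K) : Matrix (Fin m) (Fin l) K := M.toBlocks₂₂.toBlocks₁₂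

@[simp] lemma blA_tri (A B C F G) : blA (tri A B C F G : Matrix (Idx l m) (Idx l m) K) = A := rfl
@[simp] lemma blB_tri (A B C F G) : blB (tri A B C F G : Matrix (Idx l m) (Idx l m) K) = B := rfl
@[simp] lemma blC_tri (A B C F G) : blC (tri A B C F G : Matrix (Idx l m) (Idx l m) K) = C := rfl
@[simp] lemma blF_tri (A B C F G) : blF (tri A B C F G : Matrix (Idx l m) (Idx l m) K) = F := rfl
@[simp] lemma blG_tri (A B C F G) : blG (tri A B C F G : Matrix (Idx l m) (Idx l m) K) = G := rfl

@[simp] lemma blA_one : blA (1 : Matrix (Idx l m) (Idx l m) K) = 1 := by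
  rw [← tri_one]; rfl
@[simp] lemma blF_one : blF (1 : Matrix (Idx l m) (Idx l m) K) = 1 := by
  rw [← tri_one]; rfl

lemma Emat_sq : Emat l m K * Emat l m K = 0 := by
  rw [Emat, tri_mul]; simp [tri_zero]

def stdU (l m : ℕ) (K : Type*) [Field K] : GL (Idx l m) K :=
  ⟨1 + Emat l m K, 1 - Emat l m K, by
    have h := Emat_sq (l := l) (m := m) (K := K); noncomm_ring [h], by
    have h := Emat_sq (l := l) (m := m) (K := K); noncomm_ring [h]⟩

lemma mem_centralizer_iff_commE (x : GL (Idx l m) K) :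
    x ∈ Subgroup.centralizer {stdU l m K} ↔
      x.val * Emat l m K = Emat l m K * x.val := by
  rw [Subgroup.mem_centralizer_iff]
  simp only [Set.mem_singleton_iff, forall_eq]
  rw [Units.ext_iff]
  constructor
  · intro h
    simp only [Units.val_mul] at h
    have h2 : (1 + Emat l m K) * x.val = x.val * (1 + Emat l m K) := h
    rw [add_mul, mul_add, one_mul, mul_one] at h2
    linear_combination (norm := noncomm_ring) - h2
  · intro h
    simp only [Units.val_mul]
    show (1 + Emat l m K) * x.val = x.val * (1 + Emat l m K)
    rw [add_mul, mul_add, one_mul, mul_one, h]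

lemma mul_Emat_apply₃ (M : Matrix (Idx l m) (Idx l m) K) (i) (b : Fin l) :
    (M * Emat l m K) i (Sum.inr (Sum.inr b)) = M i (Sum.inl b) := by
  simp [Emat, tri, mul_apply, fromBlocks, fromCols, Fintype.sum_sum_type, one_apply]

lemma mul_Emat_apply₁ (M : Matrix (Idx l m) (Idx l m) K) (i) (b : Fin l) :
    (M * Emat l m K) i (Sum.inl b) = 0 := by
  simp [Emat, tri, mul_apply, fromBlocks, fromCols, Fintype.sum_sum_type]

lemma mul_Emat_apply₂ (M : Matrix (Idx l m) (Idx l m) K) (i) (b : Fin m) :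
    (M * Emat l m K) i (Sum.inr (Sum.inl b)) = 0 := by
  simp [Emat, tri, mul_apply, fromBlocks, fromCols, Fintype.sum_sum_type]

lemma Emat_mul_apply₁ (M : Matrix (Idx l m) (Idx l m) K) (a : Fin l) (j) :
    (Emat l m K * M) (Sum.inl a) j = M (Sum.inr (Sum.inr a)) j := by
  simp [Emat, tri, mul_apply, fromBlocks, fromCols, Fintype.sum_sum_type, one_apply]

lemma Emat_mul_apply₂ (M : Matrix (Idx l m) (Idx l m) K) (c : Fin m ⊕ Fin l) (j) :
    (Emat l m K * M) (Sum.inr c) j = 0 := by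
  cases c <;> simp [Emat, tri, mul_apply, fromBlocks, fromCols, Fintype.sum_sum_type]

lemma eq_tri_of_commE {M : Matrix (Idx l m) (Idx l m) K}
    (h : M * Emat l m K = Emat l m K * M) :
    M = tri (blA M) (blB M) (blC M) (blF M) (blG M) := by
  ext (a|c|a) (b|b|b) <;>
    simp only [tri, fromBlocks, fromCols, blA, blB, blC, blF, blG, toBlocks₁₁, toBlocks₁₂,
      toBlocks₂₂, toCols₁, toCols₂, of_apply, Sum.elim_inl, Sum.elim_inr,
      Matrix.zero_apply]
  · have := congrFun (congrFun h (Sum.inr (Sum.inl c))) (Sum.inr (Sum.inr b))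
    rw [mul_Emat_apply₃, Emat_mul_apply₂] at this
    exact this
  · have := congrFun (congrFun h (Sum.inr (Sum.inr a))) (Sum.inr (Sum.inr b))
    rw [mul_Emat_apply₃, Emat_mul_apply₂] at this
    exact this
  · have := congrFun (congrFun h (Sum.inl a)) (Sum.inr (Sum.inl b))
    rw [mul_Emat_apply₂, Emat_mul_apply₁] at this
    exact this.symm
  · have := congrFun (congrFun h (Sum.inl a)) (Sum.inr (Sum.inr b))
    rw [mul_Emat_apply₃, Emat_mul_apply₁] at this
    exact this.symm

lemma tri_commE (A B C F G) :
    (tri A B C F G : Matrix (Idx l m) (Idx l m) K) * Emat l m K =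
      Emat l m K * tri A B C F G := by
  rw [Emat, tri_mul, tri_mul]
  simp

/-- centralizer membership gives the `tri` normal form -/
lemma tri_form_of_mem {x : GL (Idx l m) K} (hx : x ∈ Subgroup.centralizer {stdU l m K}) :
    x.val = tri (blA x.val) (blB x.val) (blC x.val) (blF x.val) (blG x.val) :=
  eq_tri_of_commE ((mem_centralizer_iff_commE x).1 hx)

lemma blA_mul {x y : GL (Idx l m) K} (hx : x ∈ Subgroup.centralizer {stdU l m K})
    (hy : y ∈ Subgroup.centralizer {stdU l m K}) :
    blA (x * y).val = blA x.val * blA y.val := by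
  have : (x * y).val = x.val * y.val := rfl
  rw [this]
  conv_lhs => rw [tri_form_of_mem hx, tri_form_of_mem hy, tri_mul]
  simp

lemma blF_mul {x y : GL (Idx l m) K} (hx : x ∈ Subgroup.centralizer {stdU l m K})
    (hy : y ∈ Subgroup.centralizer {stdU l m K}) :
    blF (x * y).val = blF x.val * blF y.val := by
  have : (x * y).val = x.val * y.val := rfl
  rw [this]
  conv_lhs => rw [tri_form_of_mem hx, tri_form_of_mem hy, tri_mul]
  simp



abbrev Cent (l m : ℕ) (K : Type*) [Field K] : Subgroup (GL (Idx l m) K) :=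
  Subgroup.centralizer {stdU l m K}

lemma blA_inv_mul (x : Cent l m K) :
    blA (x : GL (Idx l m) K).val * blA ((x⁻¹ : Cent l m K) : GL (Idx l m) K).val = 1 := by
  rw [← blA_mul x.2 (x⁻¹).2]
  have : ((x : GL (Idx l m) K) * ((x⁻¹ : Cent l m K) : GL (Idx l m) K)) = 1 := by
    rw [← Subgroup.coe_mul, mul_inv_cancel]; rfl
  rw [this, Units.val_one, blA_one]

lemma blA_mul_inv (x : Cent l m K) :
    blA ((x⁻¹ : Cent l m K) : GL (Idx l m) K).val * blA (x : GL (Idx l m) K).val = 1 := by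
  have := blA_inv_mul (x⁻¹)
  rwa [inv_inv] at this

lemma blF_inv_mul (x : Cent l m K) :
    blF (x : GL (Idx l m) K).val * blF ((x⁻¹ : Cent l m K) : GL (Idx l m) K).val = 1 := by
  rw [← blF_mul x.2 (x⁻¹).2]
  have : ((x : GL (Idx l m) K) * ((x⁻¹ : Cent l m K) : GL (Idx l m) K)) = 1 := by
    rw [← Subgroup.coe_mul, mul_inv_cancel]; rfl
  rw [this, Units.val_one, blF_one]

lemma blF_mul_inv (x : Cent l m K) :
    blF ((x⁻¹ : Cent l m K) : GL (Idx l m) K).val * blF (x : GL (Idx l m) K).val = 1 := by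
  have := blF_inv_mul (x⁻¹)
  rwa [inv_inv] at this

/-- projection onto the Levi part -/
def piHom (l m : ℕ) (K : Type*) [Field K] : Cent l m K →* GL (Fin l) K × GL (Fin m) K where
  toFun x := (⟨blA (x : GL (Idx l m) K).val, blA ((x⁻¹ : Cent l m K) : GL (Idx l m) K).val,
      blA_inv_mul x, blA_mul_inv x⟩,
    ⟨blF (x : GL (Idx l m) K).val, blF ((x⁻¹ : Cent l m K) : GL (Idx l m) K).val,
      blF_inv_mul x, blF_mul_inv x⟩)
  map_one' := by
    refine Prod.ext (Units.ext ?_) (Units.ext ?_) <;> simp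
  map_mul' x y := by
    refine Prod.ext (Units.ext ?_) (Units.ext ?_)
    · exact blA_mul x.2 y.2
    · exact blF_mul x.2 y.2

/-- the Levi section -/
def sigmaHom (l m : ℕ) (K : Type*) [Field K] : GL (Fin l) K × GL (Fin m) K →* Cent l m K where
  toFun p := ⟨⟨tri p.1.val 0 0 p.2.val 0, tri (p.1⁻¹).val 0 0 (p.2⁻¹).val 0,
      by rw [tri_mul]
         simp only [Matrix.mul_zero, Matrix.zero_mul, add_zero, zero_add, Units.mul_inv,
           Units.inv_mul]
         exact tri_one,
      by rw [tri_mul]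
         simp only [Matrix.mul_zero, Matrix.zero_mul, add_zero, zero_add, Units.mul_inv,
           Units.inv_mul]
         exact tri_one⟩, by
    rw [mem_centralizer_iff_commE]
    exact tri_commE _ _ _ _ _⟩
  map_one' := by
    refine Subtype.ext (Units.ext ?_)
    simp [tri_one]
  map_mul' p q := by
    refine Subtype.ext (Units.ext ?_)
    show tri ((p.1 * q.1).val) 0 0 ((p.2 * q.2).val) 0 = tri p.1.val 0 0 p.2.val 0 * _
    rw [tri_mul]
    simp

lemma piHom_sigmaHom (p : GL (Fin l) K × GL (Fin m) K) : piHom l m K (sigmaHom l m K p) = p := by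
  refine Prod.ext (Units.ext ?_) (Units.ext ?_) <;> simp [piHom, sigmaHom]

lemma sigmaHom_injective : Function.Injective (sigmaHom l m K) := by
  intro p q h
  have := congrArg (piHom l m K) h
  rwa [piHom_sigmaHom, piHom_sigmaHom] at this

lemma mem_ker_iff (x : Cent l m K) :
    x ∈ (piHom l m K).ker ↔
      blA (x : GL (Idx l m) K).val = 1 ∧ blF (x : GL (Idx l m) K).val = 1 := by
  rw [MonoidHom.mem_ker, Prod.ext_iff, Units.ext_iff, Units.ext_iff]
  exact Iff.rfl



def matOf (x : Cent l m K) : Matrix (Idx l m) (Idx l m) K := (x : GL (Idx l m) K).val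

/-- the unipotent radical, parametrized -/
def kerTriple : ((piHom l m K).ker : Subgroup (Cent l m K)) ≃
    (Matrix (Fin l) (Fin m) K × Matrix (Fin l) (Fin l) K × Matrix (Fin m) (Fin l) K) where
  toFun x := (blB (matOf x.1), blC (matOf x.1), blG (matOf x.1))
  invFun t := ⟨⟨⟨tri 1 t.1 t.2.1 1 t.2.2, tri 1 (-t.1) (t.1 * t.2.2 - t.2.1) 1 (-t.2.2),
      by rw [tri_mul]; simp only [Matrix.one_mul, Matrix.mul_one, Matrix.mul_neg,
           Matrix.neg_mul, Matrix.mul_zero, Matrix.zero_mul]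
         rw [← tri_one]; congr 1 <;> abel,
      by rw [tri_mul]; simp only [Matrix.one_mul, Matrix.mul_one, Matrix.mul_neg,
           Matrix.neg_mul, Matrix.mul_zero, Matrix.zero_mul]
         rw [← tri_one]; congr 1 <;> abel⟩, by
      rw [mem_centralizer_iff_commE]
      exact tri_commE _ _ _ _ _⟩, by
      rw [mem_ker_iff]
      constructor <;> simp⟩
  left_inv x := by
    refine Subtype.ext (Subtype.ext (Units.ext ?_))
    obtain ⟨hA, hF⟩ := (mem_ker_iff x.1).1 x.2
    have hform := tri_form_of_mem x.1.2
    show tri 1 (blB (matOf x.1)) (blC (matOf x.1)) 1 (blG (matOf x.1)) = matOf x.1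
    simp only [matOf]
    conv_rhs => rw [hform]
    rw [hA, hF]
  right_inv t := by
    refine Prod.ext ?_ (Prod.ext ?_ ?_) <;> simp [matOf]

lemma card_ker : Nat.card ((piHom l m K).ker : Subgroup (Cent l m K)) =
    Nat.card K ^ (l * m + l * l + m * l) := by
  rw [Nat.card_congr kerTriple, Nat.card_prod, Nat.card_prod]
  have h : ∀ a b : ℕ, Nat.card (Matrix (Fin a) (Fin b) K) = Nat.card K ^ (a * b) := by
    intro a b
    rw [show Matrix (Fin a) (Fin b) K = (Fin a → Fin b → K) from rfl, Nat.card_fun,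
      Nat.card_fun, Nat.card_eq_fintype_card (α := Fin b), Nat.card_eq_fintype_card (α := Fin a),
      Fintype.card_fin, Fintype.card_fin, ← pow_mul, Nat.mul_comm b a]
  rw [h, h, h, ← pow_add, ← pow_add, ← add_assoc]

lemma nilpotent_of_mem_ker (x : Cent l m K) (hx : x ∈ (piHom l m K).ker) :
    IsNilpotent (matOf x - 1) := by
  obtain ⟨hA, hF⟩ := (mem_ker_iff x).1 hx
  have hform := tri_form_of_mem x.2
  have hn : matOf x - 1 =
      tri 0 (blB (matOf x)) (blC (matOf x)) 0 (blG (matOf x)) := by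
    simp only [matOf]
    conv_lhs => rw [hform]
    rw [hA, hF, ← tri_one, tri_sub]
    simp
  refine ⟨3, ?_⟩
  have h2 : (matOf x - 1) * (matOf x - 1) =
      tri 0 0 (blB (matOf x) * blG (matOf x)) 0 0 := by
    rw [hn, tri_mul]; simp
  have h3 : (matOf x - 1) * (matOf x - 1) * (matOf x - 1) = 0 := by
    rw [h2, hn, tri_mul]
    simpa using tri_zero
  rw [pow_succ, pow_two]
  exact h3

lemma ker_inf_range :
    (piHom l m K).ker ⊓ (sigmaHom l m K).range = (⊥ : Subgroup (Cent l m K)) := by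
  refine le_antisymm ?_ bot_le
  rintro x ⟨hk, p, rfl⟩
  have : p = 1 := by
    have := MonoidHom.mem_ker.1 hk
    rwa [piHom_sigmaHom] at this
  simp [this, Subgroup.mem_bot]

lemma ker_sup_range :
    (piHom l m K).ker ⊔ (sigmaHom l m K).range = (⊤ : Subgroup (Cent l m K)) := by
  refine le_antisymm le_top ?_
  intro c _
  have hmem : c * (sigmaHom l m K (piHom l m K c))⁻¹ ∈ (piHom l m K).ker := by
    rw [MonoidHom.mem_ker, _root_.map_mul, _root_.map_inv, piHom_sigmaHom, mul_inv_cancel]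
  have : c = (c * (sigmaHom l m K (piHom l m K c))⁻¹) * sigmaHom l m K (piHom l m K c) := by
    group
  rw [this]
  exact Subgroup.mul_mem _ (Subgroup.mem_sup_left hmem)
    (Subgroup.mem_sup_right ⟨_, rfl⟩)



@[simp] lemma Emat_apply_c1 (i : Idx l m) (b : Fin l) : Emat l m K i (Sum.inl b) = 0 := by
  rcases i with a|c <;> · first | rfl | (rcases c with c|c <;> rfl)

@[simp] lemma Emat_apply_c2 (i : Idx l m) (b : Fin m) :
    Emat l m K i (Sum.inr (Sum.inl b)) = 0 := by
  rcases i with a|c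
  · rfl
  · rcases c with c|c <;> rfl

lemma Emat_apply_c3 (i : Idx l m) (b : Fin l) :
    Emat l m K i (Sum.inr (Sum.inr b)) = if Sum.inl b = i then 1 else 0 := by
  rcases i with a|c
  · show (1 : Matrix (Fin l) (Fin l) K) a b = _
    rw [Matrix.one_apply]
    simp [eq_comm, Sum.inl.injEq]
  · rcases c with c|c <;> simp [Emat, tri, fromBlocks, fromCols]

set_option maxHeartbeats 2000000 in
set_option synthInstance.maxHeartbeats 1000000 in
theorem exists_conj {d l : ℕ} {K : Type*} [Field K] [CharP K 2]
    (u : GL (Fin d) K) (hu : u ^ 2 = 1)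
    (hl : ((u : Matrix (Fin d) (Fin d) K) - 1).rank = l) :
    2 * l ≤ d ∧ ∃ (e : Idx l (d - 2 * l) ≃ Fin d) (P : GL (Fin d) K),
      (u : Matrix (Fin d) (Fin d) K) =
        P.val * ((stdU l (d - 2 * l) K).val.submatrix e.symm e.symm) * (P⁻¹).val := by
  classical
  -- square-zero
  have hchar : ∀ M : Matrix (Fin d) (Fin d) K, M + M = 0 := by
    intro M; ext i j
    exact CharTwo.add_self_eq_zero (M i j)
  have huu : u.val * u.val = 1 := by
    have := congrArg Units.val hu
    simpa [pow_two] using this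
  have hNN : (u.val - 1) * (u.val - 1) = 0 := by
    have expand : (u.val - 1) * (u.val - 1) = (u.val * u.val + 1) - (u.val + u.val) := by
      noncomm_ring
    rw [expand, huu, hchar, hchar]
    simp
  set f := (u.val - 1).mulVecLin with hf
  have hff : ∀ x, f (f x) = 0 := by
    intro x
    have : f ∘ₗ f = 0 := by
      rw [hf, ← Matrix.mulVecLin_mul, hNN, Matrix.mulVecLin_zero]
    exact congrFun (congrArg (fun g => g.toFun) this) x
  have hrange_le_ker : LinearMap.range f ≤ LinearMap.ker f := by
    rintro x ⟨y, rfl⟩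
    exact LinearMap.mem_ker.2 (hff y)
  have hW : Module.finrank K (LinearMap.range f) = l := hl
  have hVd : Module.finrank K (Fin d → K) = d := Module.finrank_fin_fun K
  have hrn := LinearMap.finrank_range_add_finrank_ker f
  rw [hW, hVd] at hrn
  have hker : Module.finrank K (LinearMap.ker f) = d - l := by omega
  have hlk : l ≤ d - l := by
    have := Submodule.finrank_mono hrange_le_ker
    rw [hW, hker] at this
    exact this
  have h2l : 2 * l ≤ d := by omega
  refine ⟨h2l, ?_⟩
  set m' := d - 2 * l with hm'
  -- basis of range f
  let w : Module.Basis (Fin l) K (LinearMap.range f) := Module.finBasisOfFinrankEq K _ hW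
  have hwv : ∀ i : Fin l, ∃ y, f y = (w i : Fin d → K) := fun i => (w i).2
  choose v hv using hwv
  have hwli : LinearIndependent K (fun i => ((w i : Fin d → K))) :=
    w.linearIndependent.map' (LinearMap.range f).subtype (Submodule.ker_subtype _)
  have hli : LinearIndependent K v := by
    apply LinearIndependent.of_comp f
    have : f ∘ v = fun i => ((w i : Fin d → K)) := funext hv
    rw [this]
    exact hwli
  set S := Submodule.span K (Set.range v) with hS
  let bS : Module.Basis (Fin l) K S := Module.Basis.span hli
  have hSrank : Module.finrank K S = l := by
    rw [hS, finrank_span_eq_card hli, Fintype.card_fin]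
  have hdisj : Disjoint (LinearMap.ker f) S := by
    rw [Submodule.disjoint_def]
    intro x hxk hxS
    obtain ⟨c, rfl⟩ := (Submodule.mem_span_range_iff_exists_fun K).1 hxS
    have hfx : f (∑ i, c i • v i) = ∑ i, c i • (w i : Fin d → K) := by
      rw [map_sum]
      exact Finset.sum_congr rfl fun i _ => by rw [f.map_smul, hv]
    have h0 : ∑ i, c i • (w i : Fin d → K) = 0 := by
      rw [← hfx]
      exact LinearMap.mem_ker.1 hxk
    have h0' : ∑ i, c i • w i = (0 : LinearMap.range f) := by
      apply Subtype.val_injective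
      have hcoe : ((∑ i, c i • w i : LinearMap.range f) : Fin d → K) =
          ∑ i, c i • ((w i : Fin d → K)) := by
        simp
      rw [hcoe]
      simpa using h0
    have hc : ∀ i, c i = 0 := Fintype.linearIndependent_iff.1 w.linearIndependent c h0'
    simp [hc]
  have hsup : LinearMap.ker f ⊔ S = ⊤ := by
    apply Submodule.eq_top_of_finrank_eq
    have hh := Submodule.finrank_sup_add_finrank_inf_eq (LinearMap.ker f) S
    rw [disjoint_iff.1 hdisj, finrank_bot, hker, hSrank] at hh
    rw [hVd]
    omega
  have hcompl : IsCompl (LinearMap.ker f) S := ⟨hdisj, codisjoint_iff.2 hsup⟩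
  set W' := Submodule.comap (LinearMap.ker f).subtype (LinearMap.range f) with hW'def
  let eW : W' ≃ₗ[K] LinearMap.range f := Submodule.comapSubtypeEquivOfLe hrange_le_ker
  let bW' : Module.Basis (Fin l) K W' := w.map eW.symm
  obtain ⟨T', hT'⟩ := Submodule.exists_isCompl W'
  have hT'rank : Module.finrank K T' = m' := by
    have h1 := Submodule.finrank_add_eq_of_isCompl hT'
    have h2 : Module.finrank K W' = l := by rw [eW.finrank_eq, hW]
    rw [h2, hker] at h1
    omega
  haveI : Module.Free K ↥T' := Module.Free.of_divisionRing K ↥T'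
  let bT' : Module.Basis (Fin m') K T' := Module.finBasisOfFinrankEq K _ hT'rank
  let bker : Module.Basis (Fin l ⊕ Fin m') K (LinearMap.ker f) :=
    (bW'.prod bT').map (Submodule.prodEquivOfIsCompl _ _ hT')
  let bV : Module.Basis ((Fin l ⊕ Fin m') ⊕ Fin l) K (Fin d → K) :=
    (bker.prod bS).map (Submodule.prodEquivOfIsCompl _ _ hcompl)
  let b : Module.Basis (Idx l m') K (Fin d → K) := bV.reindex (Equiv.sumAssoc _ _ _)
  have hbV1 : ∀ x : Fin l ⊕ Fin m', bV (Sum.inl x) = ((bker x : ↥(LinearMap.ker f)) : Fin d → K) := by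
    intro x
    show (Submodule.prodEquivOfIsCompl _ _ hcompl) ((bker.prod bS) (Sum.inl x)) = _
    have hp : (bker.prod bS) (Sum.inl x) = (bker x, 0) :=
      Prod.ext (Module.Basis.prod_apply_inl_fst _ _ _) (Module.Basis.prod_apply_inl_snd _ _ _)
    rw [hp, Submodule.coe_prodEquivOfIsCompl']
    simp
  have hbV2 : ∀ i : Fin l, bV (Sum.inr i) = v i := by
    intro i
    show (Submodule.prodEquivOfIsCompl _ _ hcompl) ((bker.prod bS) (Sum.inr i)) = _
    have hp : (bker.prod bS) (Sum.inr i) = (0, bS i) :=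
      Prod.ext (Module.Basis.prod_apply_inr_fst _ _ _) (Module.Basis.prod_apply_inr_snd _ _ _)
    rw [hp, Submodule.coe_prodEquivOfIsCompl']
    simp only [ZeroMemClass.coe_zero, zero_add]
    exact congrArg Subtype.val (Module.Basis.span_apply hli i)
  have hbker1 : ∀ i : Fin l, ((bker (Sum.inl i) : ↥(LinearMap.ker f)) : Fin d → K)
      = (w i : Fin d → K) := by
    intro i
    show (((Submodule.prodEquivOfIsCompl _ _ hT') ((bW'.prod bT') (Sum.inl i)) :
      ↥(LinearMap.ker f)) : Fin d → K) = _
    have hp : (bW'.prod bT') (Sum.inl i) = (bW' i, 0) :=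
      Prod.ext (Module.Basis.prod_apply_inl_fst _ _ _) (Module.Basis.prod_apply_inl_snd _ _ _)
    rw [hp, Submodule.coe_prodEquivOfIsCompl']
    simp only [ZeroMemClass.coe_zero, add_zero]
    have hb : bW' i = eW.symm (w i) := Module.Basis.map_apply _ _ _
    rw [hb]
    have h2 := Submodule.comapSubtypeEquivOfLe_apply_coe hrange_le_ker (eW.symm (w i))
    rw [show Submodule.comapSubtypeEquivOfLe hrange_le_ker = eW from rfl,
      LinearEquiv.apply_symm_apply] at h2
    exact h2.symm
  have hb1 : ∀ i : Fin l, b (Sum.inl i) = (w i : Fin d → K) := by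
    intro i
    show (bV.reindex (Equiv.sumAssoc (Fin l) (Fin m') (Fin l))) (Sum.inl i) = _
    rw [Module.Basis.reindex_apply]
    show bV (Sum.inl (Sum.inl i)) = _
    rw [hbV1, hbker1]
  have hb3 : ∀ i : Fin l, b (Sum.inr (Sum.inr i)) = v i := by
    intro i
    show (bV.reindex (Equiv.sumAssoc (Fin l) (Fin m') (Fin l))) (Sum.inr (Sum.inr i)) = _
    rw [Module.Basis.reindex_apply]
    show bV (Sum.inr i) = _
    exact hbV2 i
  have hfb1 : ∀ i : Fin l, f (b (Sum.inl i)) = 0 := by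
    intro i
    rw [hb1]
    exact LinearMap.mem_ker.1 (hrange_le_ker (w i).2)
  have hfb2 : ∀ j : Fin m', f (b (Sum.inr (Sum.inl j))) = 0 := by
    intro j
    have : b (Sum.inr (Sum.inl j)) = ((bker (Sum.inr j) : ↥(LinearMap.ker f)) : Fin d → K) := by
      show (bV.reindex (Equiv.sumAssoc (Fin l) (Fin m') (Fin l))) (Sum.inr (Sum.inl j)) = _
      rw [Module.Basis.reindex_apply]
      show bV (Sum.inl (Sum.inr j)) = _
      exact hbV1 _
    rw [this]
    exact LinearMap.mem_ker.1 (bker (Sum.inr j)).2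
  have hfb3 : ∀ i : Fin l, f (b (Sum.inr (Sum.inr i))) = b (Sum.inl i) := by
    intro i
    rw [hb3, hv, hb1]
  have hgx : ∀ x, (u.val).mulVecLin x = x + f x := by
    intro x
    have h1 : u.val = 1 + (u.val - 1) := by abel
    conv_lhs => rw [h1]
    rw [Matrix.mulVecLin_add, Matrix.mulVecLin_one]
    rfl
  have key : LinearMap.toMatrix b b ((u.val).mulVecLin) = (stdU l m' K).val := by
    have hstdU : (stdU l m' K).val = 1 + Emat l m' K := rfl
    ext i j
    rw [LinearMap.toMatrix_apply, hstdU]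
    rcases j with j | j | j
    · rw [hgx, hfb1 j, add_zero, Module.Basis.repr_self]
      simp [Finsupp.single_apply, Matrix.one_apply, eq_comm]
    · rw [hgx, hfb2 j, add_zero, Module.Basis.repr_self]
      simp [Finsupp.single_apply, Matrix.one_apply, eq_comm]
    · rw [hgx, hfb3 j, map_add, Module.Basis.repr_self, Module.Basis.repr_self]
      simp only [Matrix.add_apply, Matrix.one_apply, Finsupp.coe_add, Pi.add_apply,
        Finsupp.single_apply, Emat_apply_c3]
      congr 1 <;> simp [Finsupp.single_apply, eq_comm]
  have cardeq : Fintype.card (Idx l m') = Fintype.card (Fin d) := by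
    simp only [Fintype.card_sum, Fintype.card_fin]
    omega
  let e : Idx l m' ≃ Fin d := Fintype.equivOfCardEq cardeq
  let b2 : Module.Basis (Fin d) K (Fin d → K) := b.reindex e
  have key2 : LinearMap.toMatrix b2 b2 ((u.val).mulVecLin) =
      (stdU l m' K).val.submatrix e.symm e.symm := by
    ext i j
    rw [LinearMap.toMatrix_apply, Matrix.submatrix_apply, ← key, LinearMap.toMatrix_apply]
    show (b.reindex e).repr (Matrix.mulVecLin (u.val) ((b.reindex e) j)) i = _
    rw [Module.Basis.reindex_apply, Module.Basis.repr_reindex, Finsupp.mapDomain_equiv_apply]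
  have hstd : LinearMap.toMatrix (Pi.basisFun K (Fin d)) (Pi.basisFun K (Fin d))
      ((u.val).mulVecLin) = u.val := by
    rw [LinearMap.toMatrix_eq_toMatrix']
    exact LinearMap.toMatrix'_toLin' u.val
  refine ⟨e, ⟨(Pi.basisFun K (Fin d)).toMatrix b2, b2.toMatrix (Pi.basisFun K (Fin d)),
    Module.Basis.toMatrix_mul_toMatrix_flip _ _, Module.Basis.toMatrix_mul_toMatrix_flip _ _⟩, ?_⟩
  show u.val = (Pi.basisFun K (Fin d)).toMatrix b2 *
      (stdU l m' K).val.submatrix e.symm e.symm * b2.toMatrix (Pi.basisFun K (Fin d))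
  rw [← key2, basis_toMatrix_mul_linearMap_toMatrix_mul_basis_toMatrix, hstd]


end StdStuff

open StdStuff in
set_option maxHeartbeats 2000000 in
set_option synthInstance.maxHeartbeats 1000000 in
/-- Let `u ∈ GL_d(F_q)` (`q` even) be an involution whose Jordan form has `l` blocks of
size `2` (equivalently `rank (u - 1) = l`).  Then the centralizer `C` of `u` in
`GL_d(q)` is a semidirect product `C = U ⋊ L` with `U` a normal unipotent subgroup of
order `q^(2ld - 3l²)` and `L ≅ GL_l(q) × GL_{d-2l}(q)`. -/
theorem stmt_12 (d l q : ℕ) (K : Type*) [Field K] [Fintype K] [CharP K 2]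
    (hq : Fintype.card K = q)
    (u : GL (Fin d) K) (hu : u ^ 2 = 1)
    (hl : ((u : Matrix (Fin d) (Fin d) K) - 1).rank = l) :
    ∃ U L : Subgroup (Subgroup.centralizer {u} : Subgroup (GL (Fin d) K)),
      U.Normal ∧
      (∀ x ∈ U, IsNilpotent
        ((((x : (Subgroup.centralizer {u} : Subgroup (GL (Fin d) K))) :
          GL (Fin d) K) : Matrix (Fin d) (Fin d) K) - 1)) ∧
      Nat.card U = q ^ (2 * l * d - 3 * l ^ 2) ∧
      Nonempty (L ≃* GL (Fin l) K × GL (Fin (d - 2 * l)) K) ∧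
      U ⊓ L = ⊥ ∧ U ⊔ L = ⊤ := by
  classical
  obtain ⟨h2l, e, P, hP⟩ := exists_conj u hu hl
  let m' := d - 2 * l
  let REr : Matrix (Idx l m') (Idx l m') K ≃+* Matrix (Fin d) (Fin d) K :=
    (Matrix.reindexAlgEquiv K K e).toRingEquiv
  let RE : Matrix (Idx l m') (Idx l m') K ≃* Matrix (Fin d) (Fin d) K := REr.toMulEquiv
  have hRE : ∀ M : Matrix (Idx l m') (Idx l m') K, REr M = M.submatrix e.symm e.symm := by
    intro M
    show Matrix.reindexAlgEquiv K K e M = _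
    rw [Matrix.reindexAlgEquiv_apply, Matrix.reindex_apply]
  let Φ : GL (Idx l m') K ≃* GL (Fin d) K :=
    (Units.mapEquiv RE).trans (MulAut.conj P)
  have hΦval : ∀ x : GL (Idx l m') K,
      (Φ x).val = P.val * (x.val.submatrix e.symm e.symm) * (P⁻¹).val := by
    intro x
    have h1 : Φ x = P * (Units.mapEquiv RE x) * P⁻¹ := rfl
    rw [h1, Units.val_mul, Units.val_mul]
    have h2 : ((Units.mapEquiv RE x) : Matrix (Fin d) (Fin d) K) = REr x.val := rfl
    rw [h2, hRE]
  have hΦu : Φ (stdU l m' K) = u := by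
    apply Units.ext
    rw [hΦval]
    exact hP.symm
  have hmap : Subgroup.map Φ.toMonoidHom (Cent l m' K) = Subgroup.centralizer {u} := by
    ext z
    rw [Subgroup.mem_map_equiv, Subgroup.mem_centralizer_iff, Subgroup.mem_centralizer_iff]
    simp only [Set.mem_singleton_iff, forall_eq]
    constructor
    · intro h
      have := congrArg Φ h
      rw [_root_.map_mul, _root_.map_mul, MulEquiv.apply_symm_apply, hΦu] at this
      exact this
    · intro h
      have := congrArg Φ.symm h
      rw [_root_.map_mul, _root_.map_mul] at this
      have hsu : Φ.symm u = stdU l m' K := by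
        rw [← hΦu, MulEquiv.symm_apply_apply]
      rwa [hsu] at this
  let Ψ : (Cent l m' K) ≃* (Subgroup.centralizer {u} : Subgroup (GL (Fin d) K)) :=
    (Φ.subgroupMap (Cent l m' K)).trans (MulEquiv.subgroupCongr hmap)
  refine ⟨Subgroup.map Ψ.toMonoidHom ((piHom l m' K).ker),
    Subgroup.map Ψ.toMonoidHom ((sigmaHom l m' K).range), ?_, ?_, ?_, ?_, ?_, ?_⟩
  · exact Subgroup.Normal.map (MonoidHom.normal_ker _) Ψ.toMonoidHom Ψ.surjective
  · rintro x ⟨x₀, hx₀, rfl⟩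
    obtain ⟨k, hk⟩ := nilpotent_of_mem_ker x₀ hx₀
    have hval : ((Ψ x₀ : (Subgroup.centralizer {u} : Subgroup (GL (Fin d) K))) :
        GL (Fin d) K).val = P.val * REr (matOf x₀) * (P⁻¹).val := by
      have : ((Ψ x₀ : (Subgroup.centralizer {u} : Subgroup (GL (Fin d) K))) :
          GL (Fin d) K) = Φ (x₀ : GL (Idx l m') K) := rfl
      rw [this, hΦval, hRE]
      rfl
    refine ⟨k, ?_⟩
    have hfac : ((Ψ x₀ : (Subgroup.centralizer {u} : Subgroup (GL (Fin d) K))) :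
        GL (Fin d) K).val - 1 = P.val * (REr (matOf x₀ - 1)) * (P⁻¹).val := by
      rw [hval, _root_.map_sub REr, _root_.map_one REr, mul_sub, sub_mul, mul_one]
      congr 1
      exact (Units.mul_inv P).symm
    show (((Ψ x₀ : (Subgroup.centralizer {u} : Subgroup (GL (Fin d) K))) :
        GL (Fin d) K).val - 1) ^ k = 0
    rw [hfac, Units.conj_pow, ← _root_.map_pow REr, hk, _root_.map_zero REr]
    simp
  · have hcard : Nat.card ((piHom l m' K).ker : Subgroup (Cent l m' K)) =
        Nat.card K ^ (l * m' + l * l + m' * l) := card_ker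
    rw [← Nat.card_congr (Subgroup.equivMapOfInjective _ Ψ.toMonoidHom Ψ.injective).toEquiv,
      hcard, Nat.card_eq_fintype_card, hq]
    congr 1
    obtain ⟨c, hc⟩ : ∃ c, d = c + 2 * l := ⟨d - 2 * l, by omega⟩
    subst hc
    have h1 : m' = c := by omega
    rw [h1]
    have h2 : 2 * l * (c + 2 * l) = (l * c + l * l + c * l) + 3 * l ^ 2 := by ring
    omega
  · exact ⟨((Subgroup.equivMapOfInjective _ Ψ.toMonoidHom Ψ.injective).symm).trans
      (MonoidHom.ofInjective sigmaHom_injective).symm⟩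
  · rw [← Subgroup.map_inf _ _ _ Ψ.injective, ker_inf_range, Subgroup.map_bot]
  · rw [← Subgroup.map_sup, ker_sup_range, Subgroup.map_top_of_surjective _ Ψ.surjective]
end
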